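/- arXiv:math/0511676 — 4 statements merged into one kernel-verified Lean document; each statement's English description precedes it below -/
import Mathlib

section
/- Let V be a finite-dimensional real vector space, Q a V-parallel space, and v ∈ V. If γ : I → Q and δ : J → Q are motions in Q with the same constant velocity v, defined on intervals I, J ⊆ ℝ, and if γ(s) = δ(s) for some s ∈ I ∩ J, then γ(t) = δ(t) for all t ∈ I ∩ J. -/
open Set Filter Topology Pointwise

structure ParallelSpace (V : Type*) (Q : Type*)
    [NormedAddCommGroup V] [NormedSpace ℝ V] [TopologicalSpace Q] where
  ι : Type*
  chart : ι → Set Q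
  chart_open : ∀ α, IsOpen (chart α)
  chart_cover : ∀ q : Q, ∃ α, q ∈ chart α
  φ : ι → Q → V
  φ_cont : ∀ α, ContinuousOn (φ α) (chart α)
  φ_inj : ∀ α, Set.InjOn (φ α) (chart α)
  φ_open : ∀ α, ∀ U : Set Q, U ⊆ chart α → IsOpen U →
      ∃ W : Set V, IsOpen W ∧ φ α '' U = W ∩ φ α '' chart α
  transition : ∀ α β : ι, ∀ x ∈ chart α ∩ chart β,
      ∀ᶠ y in nhdsWithin x (chart α ∩ chart β), φ α y - φ β y = φ α x - φ β x

namespace ParallelSpace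

variable {V : Type*} {Q : Type*} [NormedAddCommGroup V] [NormedSpace ℝ V]
  [TopologicalSpace Q]

def LocallyConvex (P : ParallelSpace V Q) : Prop :=
  ∀ α, Convex ℝ (P.φ α '' P.chart α)

def Polyhedral (P : ParallelSpace V Q) : Prop :=
  ∀ α, ∃ (V' : Set V) (m : ℕ) (f : Fin m → V →ₗ[ℝ] ℝ),
    IsOpen V' ∧ Convex ℝ V' ∧
    P.φ α '' P.chart α = {v ∈ V' | ∀ j, 0 ≤ f j v}

def IsMotion (P : ParallelSpace V Q) (v : V) (I : Set ℝ) (γ : ℝ → Q) : Prop :=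
  I.OrdConnected ∧ ContinuousOn γ I ∧
    ∀ α, ∀ J : Set ℝ, J ⊆ I → J.OrdConnected → (∀ t ∈ J, γ t ∈ P.chart α) →
      ∀ s ∈ J, ∀ t ∈ J, P.φ α (γ t) = P.φ α (γ s) + (t - s) • v

def maxInterval (P : ParallelSpace V Q) (v : V) (s : ℝ) (p : Q) : Set ℝ :=
  ⋃₀ {I : Set ℝ | s ∈ I ∧ ∃ γ : ℝ → Q, P.IsMotion v I γ ∧ γ s = p}

def Dom (P : ParallelSpace V Q) : Set (V × Q) :=
  {x : V × Q | (1 : ℝ) ∈ P.maxInterval x.1 0 x.2}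

def DomAt (P : ParallelSpace V Q) (p : Q) : Set V :=
  {v : V | (v, p) ∈ P.Dom}

open Classical in
noncomputable def trans (P : ParallelSpace V Q) (p : Q) (v : V) : Q :=
  if h : ∃ γ : ℝ → Q, P.IsMotion v (Set.Icc 0 1) γ ∧ γ 0 = p then h.choose 1 else p

def entRel (P : ParallelSpace V Q) (V₀ : Set V) : Set (Q × Q) :=
  {x : Q × Q | ∃ α, x.1 ∈ P.chart α ∧ x.2 ∈ P.chart α ∧ P.φ α x.1 - P.φ α x.2 ∈ V₀}

def IsCompleteP (P : ParallelSpace V Q) : Prop :=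
  ∀ F : Filter Q, F.NeBot →
    (∀ V₀ ∈ nhds (0 : V), ∃ S ∈ F, ∀ p ∈ S, ∀ q ∈ S, (p, q) ∈ P.entRel V₀) →
    ∃ x : Q, F ≤ nhds x

def LocalHomeoAt (P : ParallelSpace V Q) (p : Q) (v : V) : Prop :=
  ∃ U₀ : Set V, IsOpen U₀ ∧ v ∈ U₀ ∧
    Set.InjOn (P.trans p) (U₀ ∩ P.DomAt p) ∧
    ContinuousOn (P.trans p) (U₀ ∩ P.DomAt p) ∧
    IsOpen (P.trans p '' (U₀ ∩ P.DomAt p)) ∧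
    ∀ W : Set V, IsOpen W → IsOpen (P.trans p '' (W ∩ U₀ ∩ P.DomAt p))

end ParallelSpace

/-! Two motions with the same velocity that pass through the same point of a chart at the
same time have equal chart coordinates nearby, so by injectivity of the chart they agree
nearby. Hence the set of common times at which they agree is relatively open in the interval
`I ∩ J`; it is closed because `Q` is Hausdorff, and it is nonempty, so it is everything. -/

theorem IsPreconnected.eqOn_of_eq_imp_eventuallyEq {X Y : Type*} [TopologicalSpace X]
    [TopologicalSpace Y] [T2Space Y] {S : Set X} {f g : X → Y} (hS : IsPreconnected S)
    (hf : ContinuousOn f S) (hg : ContinuousOn g S)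
    (hloc : ∀ x ∈ S, f x = g x → f =ᶠ[𝓝[S] x] g) {x₀ : X} (hx₀ : x₀ ∈ S)
    (h₀ : f x₀ = g x₀) : EqOn f g S := by
  have : PreconnectedSpace S := Subtype.preconnectedSpace hS
  set E : Set S := {x | f x = g x}
  have hE_closed : IsClosed E := isClosed_eq hf.domRestrict hg.domRestrict
  have hE_open : IsOpen E := isOpen_iff_eventually.2 fun x hx =>
    (eventually_nhds_subtype_iff S x (fun y => f y = g y)).2 (hloc x x.2 hx)
  have hE_univ : E = univ := IsClopen.eq_univ ⟨hE_closed, hE_open⟩ ⟨⟨x₀, hx₀⟩, h₀⟩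
  intro x hx
  exact show (⟨x, hx⟩ : S) ∈ E from hE_univ ▸ mem_univ _

namespace ParallelSpace

variable {V Q : Type*} [NormedAddCommGroup V] [NormedSpace ℝ V] [TopologicalSpace Q]
  {P : ParallelSpace V Q} {v : V} {I J : Set ℝ} {γ δ : ℝ → Q}

theorem IsMotion.eqOn_of_mapsTo_chart (hγ : P.IsMotion v I γ) (hδ : P.IsMotion v J δ)
    {K : Set ℝ} (hKI : K ⊆ I) (hKJ : K ⊆ J) (hK : K.OrdConnected) {α : P.ι}
    (hγK : MapsTo γ K (P.chart α)) (hδK : MapsTo δ K (P.chart α)) {s : ℝ} (hs : s ∈ K)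
    (h : γ s = δ s) : EqOn γ δ K := fun t ht =>
  P.φ_inj α (hγK ht) (hδK ht) <| by
    rw [hγ.2.2 α K hKI hK hγK s hs t ht, hδ.2.2 α K hKJ hK hδK s hs t ht, h]

theorem IsMotion.eventuallyEq_of_eq (hγ : P.IsMotion v I γ) (hδ : P.IsMotion v J δ)
    {x : ℝ} (hx : x ∈ I ∩ J) (h : γ x = δ x) : γ =ᶠ[𝓝[I ∩ J] x] δ := by
  obtain ⟨α, hα⟩ := P.chart_cover (γ x)
  have hγα : ∀ᶠ t in 𝓝[I ∩ J] x, γ t ∈ P.chart α :=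
    ((hγ.2.1 x hx.1).mono inter_subset_left).preimage_mem_nhdsWithin
      ((P.chart_open α).mem_nhds hα)
  have hδα : ∀ᶠ t in 𝓝[I ∩ J] x, δ t ∈ P.chart α :=
    ((hδ.2.1 x hx.2).mono inter_subset_right).preimage_mem_nhdsWithin
      ((P.chart_open α).mem_nhds (h ▸ hα))
  obtain ⟨ε, hε, hball⟩ := Metric.mem_nhdsWithin_iff.1 (hγα.and hδα)
  have hK : (Metric.ball x ε ∩ (I ∩ J)).OrdConnected := by
    rw [Real.ball_eq_Ioo]
    exact ordConnected_Ioo.inter (hγ.1.inter hδ.1)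
  have hEqOn : EqOn γ δ (Metric.ball x ε ∩ (I ∩ J)) :=
    hγ.eqOn_of_mapsTo_chart hδ (fun t ht => ht.2.1) (fun t ht => ht.2.2) hK
      (fun t ht => (hball ht).1) (fun t ht => (hball ht).2) ⟨Metric.mem_ball_self hε, hx⟩ h
  filter_upwards [inter_mem_nhdsWithin (I ∩ J) (Metric.ball_mem_nhds x hε)] with t ht
  exact hEqOn ⟨ht.2, ht.1⟩

end ParallelSpace

theorem motion_unique_general {V : Type*} [NormedAddCommGroup V] [NormedSpace ℝ V]
    {Q : Type*} [TopologicalSpace Q] [T2Space Q]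
    (P : ParallelSpace V Q) (v : V) (I J : Set ℝ) (γ δ : ℝ → Q)
    (hγ : P.IsMotion v I γ) (hδ : P.IsMotion v J δ)
    (s : ℝ) (hsI : s ∈ I) (hsJ : s ∈ J) (hs : γ s = δ s) :
    ∀ t ∈ I ∩ J, γ t = δ t :=
  (hγ.1.inter hδ.1).isPreconnected.eqOn_of_eq_imp_eventuallyEq
    (hγ.2.1.mono inter_subset_left) (hδ.2.1.mono inter_subset_right)
    (fun _ hx hx' => hγ.eventuallyEq_of_eq hδ hx hx') ⟨hsI, hsJ⟩ hs

/-- two motions in a `V`-parallel space with the same constant velocity `v`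
which agree at some time `s` agree on the whole intersection of their domains. -/
theorem motion_unique {V : Type*} [NormedAddCommGroup V] [NormedSpace ℝ V]
    [FiniteDimensional ℝ V] {Q : Type*} [TopologicalSpace Q] [T2Space Q]
    (P : ParallelSpace V Q) (v : V) (I J : Set ℝ) (γ δ : ℝ → Q)
    (hγ : P.IsMotion v I γ) (hδ : P.IsMotion v J δ)
    (s : ℝ) (hsI : s ∈ I) (hsJ : s ∈ J) (hs : γ s = δ s) :
    ∀ t ∈ I ∩ J, γ t = δ t :=
  motion_unique_general P v I J γ δ hγ hδ s hsI hsJ hs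
end

section
/- Let V be a finite-dimensional real vector space and S a closed, connected subset of V such that every point x ∈ S has a neighborhood U in V for which S ∩ U is convex. Then S is convex. -/
/-!
Local convexity and connectedness join any two points `x`, `y` of `S` by `ε`-chains in `S` for
every `ε > 0`, all inside one ball. By compactness there is a `δ > 0` with `S ∩ ball p δ` convex
for every `p` of `S` in that ball, and among the `δ/2`-chains of a fixed length from `x` to `y`
one of least energy `∑ dist (c i) (c (i + 1)) ^ 2` exists. Moving an interior vertex to the
midpoint of its neighbours keeps a chain and, by Apollonius, strictly lowers the energy unless the
vertex is already there; so the minimizer is an arithmetic progression from `x` to `y`, and the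
short segments between its consecutive vertices lie in `S`. Apollonius needs a Euclidean norm,
which a linear equivalence provides.
-/

open Set Filter Topology Metric Function

-- Chains are frozen at `y` after `n` steps, so that those of a fixed length form a closed subset
-- of the product space `ℕ → X`.
structure IsEpsChain {X : Type*} [PseudoMetricSpace X] (K : Set X) (ε : ℝ) (n : ℕ) (x y : X)
    (c : ℕ → X) : Prop where
  zero : c 0 = x
  eq_of_le : ∀ i, n ≤ i → c i = y
  mem : ∀ i, c i ∈ K
  dist_le : ∀ i, dist (c i) (c (i + 1)) ≤ ε

namespace IsEpsChain

variable {X : Type*} [PseudoMetricSpace X] {K K' : Set X} {ε : ℝ} {m n : ℕ} {x y z : X}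
  {c d : ℕ → X}

theorem mono (hc : IsEpsChain K ε n x y c) (hK : K ⊆ K') : IsEpsChain K' ε n x y c :=
  ⟨hc.zero, hc.eq_of_le, fun i => hK (hc.mem i), hc.dist_le⟩

theorem pair (hx : x ∈ K) (hy : y ∈ K) (hxy : dist x y ≤ ε) :
    IsEpsChain K ε 1 x y fun i => if i = 0 then x else y where
  zero := rfl
  eq_of_le i hi := if_neg (by omega)
  mem i := by split_ifs <;> assumption
  dist_le i := by
    rcases i with _ | i
    · simpa using hxy
    · simpa using dist_nonneg.trans hxy

theorem append (hc : IsEpsChain K ε m x y c) (hd : IsEpsChain K ε n y z d) :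
    IsEpsChain K ε (m + n) x z fun i => if i ≤ m then c i else d (i - m) where
  zero := by simp [hc.zero]
  eq_of_le i hi := by
    split_ifs with him
    · rw [hc.eq_of_le i (by omega), ← hd.zero]
      exact hd.eq_of_le 0 (by omega)
    · exact hd.eq_of_le _ (by omega)
  mem i := by split_ifs <;> simp [hc.mem, hd.mem]
  dist_le i := by
    rcases lt_trichotomy i m with hi | rfl | hi
    · simpa [hi.le, Nat.succ_le_of_lt hi] using hc.dist_le i
    · simpa [hc.eq_of_le i le_rfl, ← hd.zero, Nat.add_sub_cancel_left] using hd.dist_le 0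
    · rw [if_neg (by omega), if_neg (by omega), Nat.sub_add_comm hi.le]
      exact hd.dist_le _

theorem update (hc : IsEpsChain K ε n x y c) {k : ℕ} (hk : k + 2 ≤ n) {w : X} (hw : w ∈ K)
    (h₁ : dist (c k) w ≤ ε) (h₂ : dist w (c (k + 2)) ≤ ε) :
    IsEpsChain K ε n x y (update c (k + 1) w) where
  zero := by rw [update_of_ne (by omega), hc.zero]
  eq_of_le i hi := by rw [update_of_ne (by omega), hc.eq_of_le i hi]
  mem i := by
    rcases eq_or_ne i (k + 1) with rfl | hi
    · rwa [update_self]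
    · rw [update_of_ne hi]; exact hc.mem i
  dist_le i := by
    rcases eq_or_ne i k with rfl | hik
    · rwa [update_self, update_of_ne (by omega)]
    rcases eq_or_ne i (k + 1) with rfl | hik'
    · rwa [update_self, update_of_ne (by omega)]
    rw [update_of_ne hik', update_of_ne (by omega)]
    exact hc.dist_le i

end IsEpsChain

section Chain

variable {X : Type*} [PseudoMetricSpace X] {K : Set X} {ε : ℝ} {n : ℕ} {x y : X}

theorem IsPreconnected.exists_isEpsChain (hK : IsPreconnected K) (hε : 0 < ε) (hx : x ∈ K)
    (hy : y ∈ K) : ∃ n c, IsEpsChain K ε n x y c := by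
  refine hK.induction₂' (fun x y => ∃ n c, IsEpsChain K ε n x y c) (fun x hx => ?_)
    (fun x y z _ _ _ ⟨m, c, hc⟩ ⟨n, d, hd⟩ => ⟨m + n, _, hc.append hd⟩) hx hy
  filter_upwards [mem_nhdsWithin_of_mem_nhds (ball_mem_nhds x hε), self_mem_nhdsWithin]
    with y hxy hy
  exact ⟨⟨1, _, .pair hx hy (mem_ball'.1 hxy).le⟩, ⟨1, _, .pair hy hx (mem_ball.1 hxy).le⟩⟩

def chainEnergy (n : ℕ) (c : ℕ → X) : ℝ := ∑ i ∈ Finset.range n, dist (c i) (c (i + 1)) ^ 2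

theorem chainEnergy_update {k : ℕ} (hk : k + 2 ≤ n) (c : ℕ → X) (w : X) :
    chainEnergy n (update c (k + 1) w) +
        (dist (c k) (c (k + 1)) ^ 2 + dist (c (k + 1)) (c (k + 2)) ^ 2) =
      chainEnergy n c + (dist (c k) w ^ 2 + dist w (c (k + 2)) ^ 2) := by
  have hdiff : chainEnergy n (update c (k + 1) w) - chainEnergy n c =
      (dist (c k) w ^ 2 - dist (c k) (c (k + 1)) ^ 2) +
        (dist w (c (k + 2)) ^ 2 - dist (c (k + 1)) (c (k + 2)) ^ 2) := by
    rw [chainEnergy, chainEnergy, ← Finset.sum_sub_distrib,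
      Finset.sum_eq_add_of_mem k (k + 1) (by simp; omega) (by simp; omega) (by omega)]
    · simp
    · intro i _ ⟨h₁, h₂⟩
      rw [update_of_ne h₂, update_of_ne (by omega), sub_self]
  linarith

end Chain

section Compact

variable {X : Type*} [MetricSpace X] {K : Set X} {ε : ℝ} {n : ℕ} {x y : X}

theorem isClosed_setOf_isEpsChain (hK : IsClosed K) :
    IsClosed {c : ℕ → X | IsEpsChain K ε n x y c} := by
  have : {c : ℕ → X | IsEpsChain K ε n x y c} = {c | c 0 = x} ∩ (⋂ i, {c | n ≤ i → c i = y}) ∩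
      (⋂ i, {c | c i ∈ K}) ∩ ⋂ i, {c | dist (c i) (c (i + 1)) ≤ ε} := by
    ext c
    simp only [mem_ofPred_eq, mem_inter_iff, mem_iInter]
    exact ⟨fun h => ⟨⟨⟨h.zero, h.eq_of_le⟩, h.mem⟩, h.dist_le⟩,
      fun ⟨⟨⟨h₀, h₁⟩, h₂⟩, h₃⟩ => ⟨h₀, h₁, h₂, h₃⟩⟩
  have htail (i : ℕ) : IsClosed {c : ℕ → X | n ≤ i → c i = y} := by
    by_cases hi : n ≤ i
    · simpa only [hi, true_implies] using isClosed_eq (continuous_apply i) continuous_const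
    · simp [hi]
  rw [this]
  exact (((isClosed_eq (continuous_apply 0) continuous_const).inter (isClosed_iInter htail)).inter
    (isClosed_iInter fun i => hK.preimage (continuous_apply i))).inter
    (isClosed_iInter fun i => isClosed_le (by fun_prop) continuous_const)

theorem IsCompact.exists_isEpsChain_isMinOn_chainEnergy (hK : IsCompact K) {c : ℕ → X}
    (hc : IsEpsChain K ε n x y c) :
    ∃ b, IsEpsChain K ε n x y b ∧ IsMinOn (chainEnergy n) {c | IsEpsChain K ε n x y c} b := by
  have hcompact : IsCompact {c : ℕ → X | IsEpsChain K ε n x y c} :=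
    (isCompact_univ_pi fun _ => hK).of_isClosed_subset (isClosed_setOf_isEpsChain hK.isClosed)
      fun c hc i _ => hc.mem i
  exact hcompact.exists_isMinOn ⟨c, hc⟩ (by unfold chainEnergy; fun_prop)

end Compact

section Affine

variable {V : Type*} [AddCommGroup V] [Module ℝ V]

theorem eq_lineMap_of_forall_eq_midpoint {n : ℕ} {b : ℕ → V}
    (h : ∀ k, k + 2 ≤ n → b (k + 1) = midpoint ℝ (b k) (b (k + 2))) {k : ℕ} (hk : k ≤ n) :
    b k = AffineMap.lineMap (b 0) (b 1) (k : ℝ) := by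
  have key : ∀ k, k + 1 ≤ n → b k = AffineMap.lineMap (b 0) (b 1) (k : ℝ) ∧
      b (k + 1) = AffineMap.lineMap (b 0) (b 1) ((k + 1 : ℕ) : ℝ) := by
    intro k
    induction k with
    | zero => simp
    | succ k ih =>
      intro hk
      obtain ⟨h₀, h₁⟩ := ih (by omega)
      refine ⟨h₁, ?_⟩
      have hmid := h k hk
      rw [midpoint_eq_smul_add, invOf_eq_inv] at hmid
      rw [AffineMap.lineMap_apply_module] at h₀ h₁ ⊢
      push_cast at h₀ h₁ ⊢
      linear_combination (norm := module) (-2 : ℝ) • hmid + (2 : ℝ) • h₁ - h₀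
  rcases k with _ | k
  · simp
  · exact (key k hk).2

theorem AffineMap.segment_subset_of_forall_segment_subset (f : ℝ →ᵃ[ℝ] V) {S : Set V}
    (h₀ : f 0 ∈ S) {n : ℕ} (h : ∀ k < n, segment ℝ (f k) (f (k + 1)) ⊆ S) :
    segment ℝ (f 0) (f n) ⊆ S := by
  induction n with
  | zero => simpa using h₀
  | succ n ih =>
    have hunion : segment ℝ (f 0) (f (n + 1 : ℕ)) =
        segment ℝ (f 0) (f n) ∪ segment ℝ (f n) (f (n + 1)) := by
      rw [← image_segment, ← image_segment, ← image_segment, ← image_union,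
        segment_eq_Icc (by positivity), segment_eq_Icc (by positivity), segment_eq_Icc (by simp),
        Icc_union_Icc_eq_Icc (by positivity) (by simp)]
      push_cast
      rfl
    rw [hunion]
    exact union_subset (ih fun k hk => h k (by omega)) (h n (by omega))

end Affine

section Normed

variable {E F : Type*} [NormedAddCommGroup E] [NormedSpace ℝ E] [NormedAddCommGroup F]
  [NormedSpace ℝ F] {S K : Set E} {x y : E}

def IsLocallyConvex (S : Set E) : Prop :=
  ∀ x ∈ S, ∃ U ∈ 𝓝 x, Convex ℝ (S ∩ U)

theorem exists_isEpsChain_of_segment_subset (h : segment ℝ x y ⊆ K) {ε : ℝ} (hε : 0 < ε) :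
    ∃ n c, IsEpsChain K ε n x y c := by
  obtain ⟨n, c, hc⟩ := (convex_segment x y).isPreconnected.exists_isEpsChain hε
    (left_mem_segment ℝ x y) (right_mem_segment ℝ x y)
  exact ⟨n, c, hc.mono h⟩

theorem IsLocallyConvex.preimage (hS : IsLocallyConvex S) (f : F →L[ℝ] E) :
    IsLocallyConvex (f ⁻¹' S) := by
  intro x hx
  obtain ⟨U, hU, hSU⟩ := hS (f x) hx
  exact ⟨f ⁻¹' U, f.continuous.continuousAt.preimage_mem_nhds hU,
    hSU.linear_preimage f.toLinearMap⟩

theorem IsLocallyConvex.exists_forall_convex_inter_ball (hS : IsLocallyConvex S)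
    (hK : IsCompact K) (hKS : K ⊆ S) : ∃ δ > 0, ∀ p ∈ K, Convex ℝ (S ∩ ball p δ) := by
  choose U hU hSU using hS
  obtain ⟨δ, hδ, hball⟩ := lebesgue_number_lemma_of_metric hK
    (c := fun p : S => interior (U p p.2)) (fun _ => isOpen_interior)
    fun p hp => mem_iUnion.2 ⟨⟨p, hKS hp⟩, mem_interior_iff_mem_nhds.2 (hU p _)⟩
  refine ⟨δ, hδ, fun p hp => ?_⟩
  obtain ⟨q, hq⟩ := hball p hp
  have : S ∩ ball p δ = S ∩ U q q.2 ∩ ball p δ := by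
    rw [inter_assoc, inter_eq_right.2 (hq.trans interior_subset)]
  rw [this]
  exact (hSU q q.2).inter (convex_ball p δ)

theorem IsLocallyConvex.exists_isEpsChain_inter_closedBall (hS : IsLocallyConvex S)
    (hconn : IsPreconnected S) (hx : x ∈ S) (hy : y ∈ S) :
    ∃ R, ∀ ε > 0, ∃ n c, IsEpsChain (S ∩ closedBall 0 R) ε n x y c := by
  refine hconn.induction₂'
    (fun x y => ∃ R, ∀ ε > 0, ∃ n c, IsEpsChain (S ∩ closedBall 0 R) ε n x y c)
    (fun x hx => ?_) ?_ hx hy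
  · obtain ⟨U, hU, hSU⟩ := hS x hx
    filter_upwards [inter_mem_nhdsWithin S hU] with y ⟨hyS, hyU⟩
    have hseg : segment ℝ x y ⊆ S ∩ closedBall 0 (max ‖x‖ ‖y‖) :=
      subset_inter
        ((hSU.segment_subset ⟨hx, mem_of_mem_nhds hU⟩ ⟨hyS, hyU⟩).trans inter_subset_left)
        ((convex_closedBall 0 _).segment_subset (by simp) (by simp))
    exact ⟨⟨_, fun ε hε => exists_isEpsChain_of_segment_subset hseg hε⟩,
      ⟨_, fun ε hε => exists_isEpsChain_of_segment_subset (segment_symm ℝ y x ▸ hseg) hε⟩⟩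
  · rintro x y z - - - ⟨R, hR⟩ ⟨R', hR'⟩
    refine ⟨max R R', fun ε hε => ?_⟩
    obtain ⟨m, c, hc⟩ := hR ε hε
    obtain ⟨n, d, hd⟩ := hR' ε hε
    have hball (r : ℝ) (hr : r ≤ max R R') : S ∩ closedBall 0 r ⊆ S ∩ closedBall 0 (max R R') :=
      inter_subset_inter_right _ (closedBall_subset_closedBall hr)
    exact ⟨m + n, _, (hc.mono (hball R (le_max_left _ _))).append
      (hd.mono (hball R' (le_max_right _ _)))⟩

theorem IsEpsChain.segment_subset_of_eq_midpoint {δ ε : ℝ} {n : ℕ} {b : ℕ → E}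
    (hKS : K ⊆ S) (hconv : ∀ p ∈ K, Convex ℝ (S ∩ ball p δ)) (hεδ : ε < δ)
    (hb : IsEpsChain K ε n x y b)
    (hmid : ∀ k, k + 2 ≤ n → b (k + 1) = midpoint ℝ (b k) (b (k + 2))) :
    segment ℝ x y ⊆ S := by
  set f : ℝ →ᵃ[ℝ] E := AffineMap.lineMap (b 0) (b 1)
  have hf (k : ℕ) (hk : k ≤ n) : f k = b k := (eq_lineMap_of_forall_eq_midpoint hmid hk).symm
  have hstep (k : ℕ) : segment ℝ (b k) (b (k + 1)) ⊆ S := by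
    have hδ : 0 < δ := dist_nonneg.trans_lt ((hb.dist_le k).trans_lt hεδ)
    refine ((hconv _ (hb.mem k)).segment_subset ⟨hKS (hb.mem k), mem_ball_self hδ⟩
      ⟨hKS (hb.mem (k + 1)), ?_⟩).trans inter_subset_left
    exact mem_ball'.2 ((hb.dist_le k).trans_lt hεδ)
  have hf₀ : f 0 = x := by simp [f, hb.zero]
  have := f.segment_subset_of_forall_segment_subset (n := n)
    (by rw [hf₀, ← hb.zero]; exact hKS (hb.mem 0))
    fun k hk => by simpa [hf k hk.le, ← hf (k + 1) hk] using hstep k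
  rwa [hf₀, hf n le_rfl, hb.eq_of_le n le_rfl] at this

end Normed

section Euclidean

variable {E : Type*} [NormedAddCommGroup E] [InnerProductSpace ℝ E]

theorem dist_midpoint_sq_add_lt {a b p : E} (hp : p ≠ midpoint ℝ a b) :
    dist a (midpoint ℝ a b) ^ 2 + dist (midpoint ℝ a b) b ^ 2 < dist a p ^ 2 + dist p b ^ 2 := by
  have hapollonius :=
    EuclideanGeometry.dist_sq_add_dist_sq_eq_two_mul_dist_midpoint_sq_add_half_dist_sq p a b
  have hpos : 0 < dist p (midpoint ℝ a b) := dist_pos.2 hp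
  rw [dist_left_midpoint, dist_midpoint_right, dist_comm a p]
  simp only [Real.norm_two]
  nlinarith

theorem IsEpsChain.eq_midpoint_of_isMinOn {S B : Set E} {δ ε : ℝ} {n : ℕ} {x y : E}
    {b : ℕ → E} (hB : Convex ℝ B) (hconv : ∀ p ∈ S ∩ B, Convex ℝ (S ∩ ball p δ)) (hεδ : ε < δ)
    (hb : IsEpsChain (S ∩ B) ε n x y b)
    (hmin : IsMinOn (chainEnergy n) {c | IsEpsChain (S ∩ B) ε n x y c} b) {k : ℕ}
    (hk : k + 2 ≤ n) : b (k + 1) = midpoint ℝ (b k) (b (k + 2)) := by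
  by_contra hne
  set m := midpoint ℝ (b k) (b (k + 2))
  have h₁ := hb.dist_le k
  have h₂ := hb.dist_le (k + 1)
  have hm : m ∈ S ∩ B := by
    refine ⟨((hconv _ (hb.mem (k + 1))).midpoint_mem ⟨(hb.mem k).1, ?_⟩ ⟨(hb.mem (k + 2)).1, ?_⟩).1,
      hB.midpoint_mem (hb.mem k).2 (hb.mem (k + 2)).2⟩
    · rw [mem_ball]; linarith
    · rw [mem_ball']; linarith
  have hhalf : dist (b k) m ≤ ε ∧ dist m (b (k + 2)) ≤ ε := by
    have := dist_triangle (b k) (b (k + 1)) (b (k + 2))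
    rw [dist_left_midpoint, dist_midpoint_right]
    simp only [Real.norm_two]
    constructor <;> linarith
  have hle : chainEnergy n b ≤ chainEnergy n (Function.update b (k + 1) m) :=
    hmin (hb.update hk hm hhalf.1 hhalf.2)
  have := chainEnergy_update hk b m
  have := dist_midpoint_sq_add_lt hne
  linarith

theorem IsLocallyConvex.convex_of_isClosed_of_isPreconnected [ProperSpace E] {S : Set E}
    (hS : IsLocallyConvex S) (hclosed : IsClosed S) (hconn : IsPreconnected S) :
    Convex ℝ S := by
  refine convex_iff_segment_subset.2 fun x hx y hy => ?_
  obtain ⟨R, hR⟩ := hS.exists_isEpsChain_inter_closedBall hconn hx hy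
  have hK : IsCompact (S ∩ closedBall 0 R) := (isCompact_closedBall 0 R).inter_left hclosed
  obtain ⟨δ, hδ, hconv⟩ := hS.exists_forall_convex_inter_ball hK inter_subset_left
  obtain ⟨n, c, hc⟩ := hR (δ / 2) (by positivity)
  obtain ⟨b, hb, hmin⟩ := hK.exists_isEpsChain_isMinOn_chainEnergy hc
  exact hb.segment_subset_of_eq_midpoint inter_subset_left hconv (by linarith)
    fun k hk => hb.eq_midpoint_of_isMinOn (convex_closedBall 0 R) hconv (by linarith) hmin hk

end Euclidean

/-- Tietze–Nakajima: a closed, connected, locally convex subset of a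
finite-dimensional real vector space is convex. -/
theorem tietze_nakajima {V : Type*} [NormedAddCommGroup V] [NormedSpace ℝ V]
    [FiniteDimensional ℝ V] (S : Set V) (hclosed : IsClosed S) (hconn : IsConnected S)
    (hloc : ∀ x ∈ S, ∃ U ∈ nhds x, Convex ℝ (S ∩ U)) :
    Convex ℝ S := by
  let e := toEuclidean (E := V)
  have hconv : Convex ℝ (e.symm ⁻¹' S) := by
    refine IsLocallyConvex.convex_of_isClosed_of_isPreconnected
      (IsLocallyConvex.preimage hloc e.symm.toContinuousLinearMap)
      (hclosed.preimage e.symm.continuous) ?_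
    rw [← e.image_eq_preimage_symm]
    exact hconn.isPreconnected.image e e.continuous.continuousOn
  simpa using hconv.linear_preimage e.toLinearMap
end

section
/- Let V be a real vector space, Λ an additive subgroup of V, and q : V → V/Λ the quotient homomorphism. Let d ≥ 1, let ε¹,…,ε^d be the standard basis of ℤ^d, and let c : ℤ^d × ℤ^d → V be a biadditive antisymmetric map with c(ζ,ζ') ∈ Λ for all ζ, ζ' ∈ ℤ^d. Suppose τ : ℤ^d → V/Λ satisfies τ(ζ') + τ(ζ) = τ(ζ + ζ') + q(c(ζ',ζ)/2) for all ζ, ζ' ∈ ℤ^d. Then for every ζ = (ζ₁,…,ζ_d) ∈ ℤ^d one has τ(ζ) = q( (1/2) · Σ_{1 ≤ l < l' ≤ d} ζ_l ζ_{l'} c(ε^l, ε^{l'}) ) + Σ_{l=1}^{d} ζ_l · τ(ε^l), where ζ_l · τ(ε^l) denotes the ζ_l-fold sum in the abelian group V/Λ. -/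
/-!
Let `F(x, y) = Σ_{l<l'} x_l y_{l'} c(εˡ, εˡ')`. By biadditivity and antisymmetry
`c(y, x) = F(y, x) - F(x, y)`, while `F(x+y, x+y) - F(x, x) - F(y, y) = F(x, y) + F(y, x)`.
Hence `z ↦ q(½ F(z, z))` satisfies the holonomy relation up to `q(F(y, x)) = 0`, so
`τ - q(½ F(·, ·))` is a homomorphism `ℤ^d → V/Λ`; it is determined by its values on the basis
vectors, where `F` vanishes.
-/

open Finset

section UpperTriangular

variable {ι M : Type*} [Fintype ι] [LinearOrder ι] [AddCommGroup M]

def upperTriangularForm (b : ι → ι → M) (x y : ι → ℤ) : M :=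
  ∑ l, ∑ l', if l < l' then (x l * y l') • b l l' else 0

variable (b : ι → ι → M)

theorem upperTriangularForm_add_left (x y z : ι → ℤ) :
    upperTriangularForm b (x + y) z = upperTriangularForm b x z + upperTriangularForm b y z := by
  simp only [upperTriangularForm, ← sum_add_distrib]
  refine sum_congr rfl fun l _ => sum_congr rfl fun l' _ => ?_
  split_ifs <;> simp [add_mul, add_smul]

theorem upperTriangularForm_add_right (x y z : ι → ℤ) :
    upperTriangularForm b x (y + z) = upperTriangularForm b x y + upperTriangularForm b x z := by
  simp only [upperTriangularForm, ← sum_add_distrib]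
  refine sum_congr rfl fun l _ => sum_congr rfl fun l' _ => ?_
  split_ifs <;> simp [mul_add, add_smul]

theorem upperTriangularForm_add_add (x y : ι → ℤ) :
    upperTriangularForm b (x + y) (x + y) = upperTriangularForm b x x + upperTriangularForm b y y
      + (upperTriangularForm b x y + upperTriangularForm b y x) := by
  simp only [upperTriangularForm_add_left, upperTriangularForm_add_right]
  abel

theorem upperTriangularForm_single_self (i : ι) :
    upperTriangularForm b (Pi.single i 1) (Pi.single i 1) = 0 := by
  refine sum_eq_zero fun l _ => sum_eq_zero fun l' _ => ?_
  split_ifs with h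
  · rcases eq_or_ne l i with rfl | hl
    · simp [h.ne']
    · simp [hl]
  · rfl

theorem upperTriangularForm_mem {S : Type*} [SetLike S M] [AddSubgroupClass S M] {Λ : S}
    (hb : ∀ l l', b l l' ∈ Λ) (x y : ι → ℤ) : upperTriangularForm b x y ∈ Λ :=
  sum_mem fun l _ => sum_mem fun l' _ => by
    split_ifs
    · exact zsmul_mem (hb l l') _
    · exact zero_mem Λ

theorem sum_sum_eq_upperTriangularForm_sub [IsAddTorsionFree M] (hb : ∀ l l', b l l' = -b l' l)
    (x y : ι → ℤ) :
    ∑ l, ∑ l', (x l * y l') • b l l' = upperTriangularForm b x y - upperTriangularForm b y x := by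
  have hdiag (l : ι) : b l l = 0 := self_eq_neg.mp (hb l l)
  have hsplit (l l' : ι) : (x l * y l') • b l l' =
      (if l < l' then (x l * y l') • b l l' else 0)
        + (if l' < l then (x l * y l') • b l l' else 0) := by
    rcases lt_trichotomy l l' with h | rfl | h
    · simp [h, h.not_gt]
    · simp [hdiag]
    · simp [h, h.not_gt]
  rw [sum_congr rfl fun l _ => sum_congr rfl fun l' _ => hsplit l l']
  simp only [sum_add_distrib, upperTriangularForm, sub_eq_add_neg, ← sum_neg_distrib]
  congr 1
  rw [sum_comm]
  refine sum_congr rfl fun l _ => sum_congr rfl fun l' _ => ?_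
  split_ifs <;> simp [hb l' l, mul_comm]

theorem mk'_half_smul_upperTriangularForm_add {V : Type*} [AddCommGroup V] [Module ℝ V]
    {Λ : AddSubgroup V} {b : ι → ι → V} (hb : ∀ l l', b l l' ∈ Λ) (x y : ι → ℤ) :
    QuotientAddGroup.mk' Λ ((2⁻¹ : ℝ) • upperTriangularForm b y y)
        + QuotientAddGroup.mk' Λ ((2⁻¹ : ℝ) • upperTriangularForm b x x)
      = QuotientAddGroup.mk' Λ ((2⁻¹ : ℝ) • upperTriangularForm b (x + y) (x + y))
        + QuotientAddGroup.mk' Λ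
            ((2⁻¹ : ℝ) • (upperTriangularForm b y x - upperTriangularForm b x y)) := by
  rw [← sub_eq_zero, ← map_add, ← map_add, ← map_sub, upperTriangularForm_add_add,
    show ∀ a b c d : V, (2⁻¹ : ℝ) • a + (2⁻¹ : ℝ) • b - ((2⁻¹ : ℝ) • (b + a + (c + d))
      + (2⁻¹ : ℝ) • (d - c)) = -d by intros; module,
    map_neg, neg_eq_zero]
  exact (QuotientAddGroup.eq_zero_iff _).mpr (upperTriangularForm_mem b hb y x)

end UpperTriangular

theorem AddMonoidHom.eq_sum_zsmul_single {ι M : Type*} [Fintype ι] [DecidableEq ι]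
    [AddCommGroup M] (f : (ι → ℤ) →+ M) (x : ι → ℤ) :
    f x = ∑ i, x i • f (Pi.single i 1) := by
  conv_lhs => rw [← univ_sum_single x]
  simp [map_sum, ← map_zsmul, ← Pi.single_smul']

theorem AddMonoidHom.apply_apply_eq_sum_sum {ι M : Type*} [Fintype ι] [DecidableEq ι]
    [AddCommGroup M] (c : (ι → ℤ) →+ (ι → ℤ) →+ M) (x y : ι → ℤ) :
    c x y = ∑ l, ∑ l', (x l * y l') • c (Pi.single l 1) (Pi.single l' 1) := by
  rw [c.eq_sum_zsmul_single x, AddMonoidHom.finsetSum_apply]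
  refine sum_congr rfl fun l _ => ?_
  rw [AddMonoidHom.smul_apply, eq_sum_zsmul_single _ y, smul_sum]
  simp [mul_smul]

theorem sub_map_add_of_add_eq_add {A G : Type*} [Add A] [AddCommGroup G] {τ σ : A → G}
    {β : A → A → G} (hτ : ∀ x y, τ y + τ x = τ (x + y) + β x y)
    (hσ : ∀ x y, σ y + σ x = σ (x + y) + β x y) (x y : A) :
    (τ - σ) (x + y) = (τ - σ) x + (τ - σ) y := by
  simp only [Pi.sub_apply]
  linear_combination (norm := abel) hσ x y - hτ x y

theorem holonomy_formula_general {V : Type*} [AddCommGroup V] [Module ℝ V] (Λ : AddSubgroup V)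
    (d : ℕ)
    (c : (Fin d → ℤ) → (Fin d → ℤ) → V)
    (hc1 : ∀ x y z : Fin d → ℤ, c (x + y) z = c x z + c y z)
    (hc2 : ∀ x y z : Fin d → ℤ, c x (y + z) = c x y + c x z)
    (hanti : ∀ x y : Fin d → ℤ, c x y = - c y x)
    (hΛ : ∀ x y : Fin d → ℤ, c x y ∈ Λ)
    (τ : (Fin d → ℤ) → V ⧸ Λ)
    (hτ : ∀ ζ ζ' : Fin d → ℤ,
      τ ζ' + τ ζ = τ (ζ + ζ') + QuotientAddGroup.mk' Λ ((2⁻¹ : ℝ) • c ζ' ζ)) :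
    ∀ ζ : Fin d → ℤ,
      τ ζ = QuotientAddGroup.mk' Λ ((2⁻¹ : ℝ) •
          ∑ l : Fin d, ∑ l' : Fin d,
            (if l < l' then (ζ l * ζ l') • c (Pi.single l 1) (Pi.single l' 1) else 0))
        + ∑ l : Fin d, ζ l • τ (Pi.single l 1) := by
  have : IsAddTorsionFree V := .of_isTorsionFree ℝ V
  set b : Fin d → Fin d → V := fun l l' => c (Pi.single l 1) (Pi.single l' 1)
  set q := QuotientAddGroup.mk' Λ
  have hc (x y : Fin d → ℤ) : c x y = upperTriangularForm b x y - upperTriangularForm b y x := by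
    let C : (Fin d → ℤ) →+ (Fin d → ℤ) →+ V :=
      AddMonoidHom.mk' (fun x => AddMonoidHom.mk' (c x) (hc2 x)) fun x x' =>
        AddMonoidHom.ext (hc1 x x')
    exact (C.apply_apply_eq_sum_sum x y).trans
      (sum_sum_eq_upperTriangularForm_sub b (fun _ _ => hanti _ _) x y)
  let g : (Fin d → ℤ) →+ V ⧸ Λ :=
    AddMonoidHom.mk' (τ - fun z => q ((2⁻¹ : ℝ) • upperTriangularForm b z z))
      (sub_map_add_of_add_eq_add hτ fun x y => by
        rw [hc]; exact mk'_half_smul_upperTriangularForm_add (fun _ _ => hΛ _ _) x y)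
  intro ζ
  have hgζ := g.eq_sum_zsmul_single ζ
  simp only [g, AddMonoidHom.mk'_apply, Pi.sub_apply, upperTriangularForm_single_self,
    smul_zero, map_zero, sub_zero] at hgζ
  rw [← hgζ]
  exact (add_sub_cancel _ _).symm

/-- if `τ : ℤ^d → V/Λ` satisfies the holonomy relation
`τ(ζ') + τ(ζ) = τ(ζ + ζ') + q(c(ζ',ζ)/2)` for a biadditive antisymmetric `c` with values in
`Λ`, then `τ(ζ) = q((1/2)·Σ_{l<l'} ζ_l ζ_{l'} c(ε^l,ε^{l'})) + Σ_l ζ_l·τ(ε^l)`. -/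
theorem holonomy_formula {V : Type*} [AddCommGroup V] [Module ℝ V] (Λ : AddSubgroup V)
    (d : ℕ) (hd : 1 ≤ d)
    (c : (Fin d → ℤ) → (Fin d → ℤ) → V)
    (hc1 : ∀ x y z : Fin d → ℤ, c (x + y) z = c x z + c y z)
    (hc2 : ∀ x y z : Fin d → ℤ, c x (y + z) = c x y + c x z)
    (hanti : ∀ x y : Fin d → ℤ, c x y = - c y x)
    (hΛ : ∀ x y : Fin d → ℤ, c x y ∈ Λ)
    (τ : (Fin d → ℤ) → V ⧸ Λ)
    (hτ : ∀ ζ ζ' : Fin d → ℤ,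
      τ ζ' + τ ζ = τ (ζ + ζ') + QuotientAddGroup.mk' Λ ((2⁻¹ : ℝ) • c ζ' ζ)) :
    ∀ ζ : Fin d → ℤ,
      τ ζ = QuotientAddGroup.mk' Λ ((2⁻¹ : ℝ) •
          ∑ l : Fin d, ∑ l' : Fin d,
            (if l < l' then (ζ l * ζ l') • c (Pi.single l 1) (Pi.single l' 1) else 0))
        + ∑ l : Fin d, ζ l • τ (Pi.single l 1) :=
  holonomy_formula_general Λ d c hc1 hc2 hanti hΛ τ hτ
end

section
/- Let V be a real vector space, Λ an additive subgroup of V, and q : V → V/Λ the quotient homomorphism. Let d ≥ 1 and let c : ℤ^d × ℤ^d → V be a biadditive antisymmetric map with c(ζ,ζ') ∈ Λ for all ζ, ζ' ∈ ℤ^d. Let Hom_c(ℤ^d, V/Λ) denote the set of all maps τ : ℤ^d → V/Λ satisfying τ(ζ') + τ(ζ) = τ(ζ + ζ') + q(c(ζ',ζ)/2) for all ζ, ζ' ∈ ℤ^d. Then Hom_c(ℤ^d, V/Λ) is nonempty, and for every τ₀ ∈ Hom_c(ℤ^d, V/Λ) the map h ↦ τ₀ + h (pointwise addition) is a bijection from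 the group Hom(ℤ^d, V/Λ) of group homomorphisms onto Hom_c(ℤ^d, V/Λ); equivalently, Hom(ℤ^d, V/Λ) acts freely and transitively on Hom_c(ℤ^d, V/Λ) by pointwise addition. -/
/-!
Since `c` is alternating, it equals `B - Bᵀ` for its strictly upper triangular part `B` in the
standard basis of `ℤ^d`, which is again biadditive and `Λ`-valued. The map
`ζ ↦ q(-½ B(ζ, ζ))` then lies in `Hom_c`: its defect from additivity is `q(½(B(ζ, ζ') + B(ζ', ζ)))`,
which differs from `q(½ c(ζ', ζ))` by `q(B(ζ, ζ')) = 0`. The difference of two elements of `Hom_c`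
is a homomorphism, because their correction terms cancel.
-/

/-- The set `Hom_c(ℤ^d, V/Λ)` of maps `τ : ℤ^d → V/Λ` satisfying the holonomy relation
`τ(ζ') + τ(ζ) = τ(ζ + ζ') + q(c(ζ',ζ)/2)`. -/
def HomC {V : Type*} [AddCommGroup V] [Module ℝ V] (Λ : AddSubgroup V) (d : ℕ)
    (c : (Fin d → ℤ) → (Fin d → ℤ) → V) : Set ((Fin d → ℤ) → V ⧸ Λ) :=
  {τ | ∀ ζ ζ' : Fin d → ℤ,
    τ ζ' + τ ζ = τ (ζ + ζ') + QuotientAddGroup.mk' Λ ((2⁻¹ : ℝ) • c ζ' ζ)}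

open Finset

namespace AddMonoidHom

variable {ι G : Type*} [AddCommGroup G]

theorem neg_flip_of_alternating {M : Type*} [AddCommGroup M] {C : M →+ M →+ G}
    (hC : ∀ x, C x x = 0) (x y : M) : -C y x = C x y := by
  have := hC (x + y)
  simp only [map_add, add_apply, hC, zero_add, add_zero] at this
  exact neg_eq_of_add_eq_zero_right this

theorem apply_single_single_self_of_alternating [DecidableEq ι] {C : (ι → ℤ) →+ (ι → ℤ) →+ G}
    (hC : ∀ x, C x x = 0) (i : ι) (a b : ℤ) : C (Pi.single i a) (Pi.single i b) = 0 := by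
  rw [← mul_one a, ← mul_one b, ← smul_eq_mul, ← smul_eq_mul, Pi.single_smul, Pi.single_smul,
    map_zsmul, map_zsmul, zsmul_apply, hC, smul_zero, smul_zero]

def coordProj [DecidableEq ι] (i : ι) : (ι → ℤ) →+ (ι → ℤ) :=
  (single (fun _ => ℤ) i).comp (Pi.evalAddMonoidHom (fun _ => ℤ) i)

variable [Fintype ι] [LinearOrder ι]

def upperTriangularPart (C : (ι → ℤ) →+ (ι → ℤ) →+ G) : (ι → ℤ) →+ (ι → ℤ) →+ G :=
  ∑ i, ∑ j, if i < j then (C.comp (coordProj i)).compl₂ (coordProj j) else 0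

theorem upperTriangularPart_apply (C : (ι → ℤ) →+ (ι → ℤ) →+ G) (x y : ι → ℤ) :
    C.upperTriangularPart x y =
      ∑ i, ∑ j, if i < j then C (Pi.single i (x i)) (Pi.single j (y j)) else 0 := by
  simp only [upperTriangularPart, finsetSum_apply]
  refine sum_congr rfl fun i _ => sum_congr rfl fun j _ => ?_
  split_ifs <;> rfl

theorem upperTriangularPart_mem {C : (ι → ℤ) →+ (ι → ℤ) →+ G} {H : AddSubgroup G}
    (hC : ∀ x y, C x y ∈ H) (x y : ι → ℤ) : C.upperTriangularPart x y ∈ H := by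
  rw [upperTriangularPart_apply]
  refine sum_mem fun i _ => sum_mem fun j _ => ?_
  split_ifs
  exacts [hC _ _, H.zero_mem]

theorem eq_upperTriangularPart_sub_flip {C : (ι → ℤ) →+ (ι → ℤ) →+ G} (hC : ∀ x, C x x = 0)
    (x y : ι → ℤ) : C x y = C.upperTriangularPart x y - C.upperTriangularPart y x := by
  have hsplit : ∀ i j, C (Pi.single i (x i)) (Pi.single j (y j)) =
      (if i < j then C (Pi.single i (x i)) (Pi.single j (y j)) else 0) -
        if j < i then C (Pi.single j (y j)) (Pi.single i (x i)) else 0 := by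
    intro i j
    rcases lt_trichotomy i j with hij | rfl | hji
    · simp [hij, hij.not_gt]
    · simp [apply_single_single_self_of_alternating hC]
    · simp [hji, hji.not_gt, neg_flip_of_alternating hC]
  calc C x y = ∑ i, ∑ j, C (Pi.single i (x i)) (Pi.single j (y j)) := by
        conv_lhs => rw [← univ_sum_single x, ← univ_sum_single y]
        simp only [map_sum, finsetSum_apply]
        exact sum_comm
    _ = _ := by
        rw [sum_congr rfl fun i _ => sum_congr rfl fun j _ => hsplit i j]
        simp only [sum_sub_distrib, upperTriangularPart_apply]
        rw [sum_comm (f := fun i j => if j < i then _ else _)]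

end AddMonoidHom

section HomC

variable {V : Type*} [AddCommGroup V] [Module ℝ V] {Λ : AddSubgroup V} {d : ℕ}
  {c : (Fin d → ℤ) → (Fin d → ℤ) → V}

theorem mk_neg_half_apply_self_mem_homC {B : (Fin d → ℤ) →+ (Fin d → ℤ) →+ V}
    (hB : ∀ x y, B x y ∈ Λ) (hcB : ∀ x y, c x y = B x y - B y x) :
    (fun ζ => QuotientAddGroup.mk' Λ ((-2⁻¹ : ℝ) • B ζ ζ)) ∈ HomC Λ d c := by
  intro ζ ζ'
  rw [← map_add, ← map_add, QuotientAddGroup.mk'_apply, QuotientAddGroup.mk'_apply,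
    QuotientAddGroup.eq]
  convert Λ.neg_mem (hB ζ ζ') using 1
  simp only [hcB, map_add, AddMonoidHom.add_apply]
  module

theorem add_addMonoidHom_mem_homC {τ₀ : (Fin d → ℤ) → V ⧸ Λ} (hτ₀ : τ₀ ∈ HomC Λ d c)
    (h : (Fin d → ℤ) →+ V ⧸ Λ) : (fun ζ => τ₀ ζ + h ζ) ∈ HomC Λ d c := by
  intro ζ ζ'
  simp only [map_add]
  rw [add_add_add_comm, hτ₀ ζ ζ']
  abel

theorem existsUnique_addMonoidHom_of_mem_homC {τ₀ τ : (Fin d → ℤ) → V ⧸ Λ}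
    (hτ₀ : τ₀ ∈ HomC Λ d c) (hτ : τ ∈ HomC Λ d c) :
    ∃! h : (Fin d → ℤ) →+ V ⧸ Λ, ∀ ζ, τ ζ = τ₀ ζ + h ζ := by
  have hsub_add : ∀ ζ ζ', τ (ζ + ζ') - τ₀ (ζ + ζ') = (τ ζ - τ₀ ζ) + (τ ζ' - τ₀ ζ') := by
    intro ζ ζ'
    rw [eq_sub_of_add_eq (hτ ζ ζ').symm, eq_sub_of_add_eq (hτ₀ ζ ζ').symm]
    abel
  refine ⟨AddMonoidHom.mk' (fun ζ => τ ζ - τ₀ ζ) hsub_add, fun ζ => (add_sub_cancel _ _).symm,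
    fun h hh => AddMonoidHom.ext fun ζ => ?_⟩
  exact eq_sub_of_add_eq' (hh ζ).symm

end HomC

theorem homC_nonempty_torsor_general {V : Type*} [AddCommGroup V] [Module ℝ V] (Λ : AddSubgroup V)
    (d : ℕ)
    (c : (Fin d → ℤ) → (Fin d → ℤ) → V)
    (hc1 : ∀ x y z : Fin d → ℤ, c (x + y) z = c x z + c y z)
    (hc2 : ∀ x y z : Fin d → ℤ, c x (y + z) = c x y + c x z)
    (hanti : ∀ x y : Fin d → ℤ, c x y = - c y x)
    (hΛ : ∀ x y : Fin d → ℤ, c x y ∈ Λ) :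
    (HomC Λ d c).Nonempty ∧
    ∀ τ₀ ∈ HomC Λ d c,
      (∀ h : (Fin d → ℤ) →+ V ⧸ Λ, (fun ζ => τ₀ ζ + h ζ) ∈ HomC Λ d c) ∧
      (∀ τ ∈ HomC Λ d c, ∃! h : (Fin d → ℤ) →+ V ⧸ Λ, ∀ ζ, τ ζ = τ₀ ζ + h ζ) := by
  let C : (Fin d → ℤ) →+ (Fin d → ℤ) →+ V :=
    AddMonoidHom.mk' (fun x => AddMonoidHom.mk' (c x) (hc2 x)) fun x y =>
      AddMonoidHom.ext (hc1 x y)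
  have : IsAddTorsionFree V := .of_isTorsionFree ℝ V
  have hC : ∀ x, C x x = 0 := fun x => self_eq_neg.mp (hanti x x)
  refine ⟨⟨_, mk_neg_half_apply_self_mem_homC (C.upperTriangularPart_mem hΛ)
    (C.eq_upperTriangularPart_sub_flip hC)⟩, fun τ₀ hτ₀ =>
    ⟨add_addMonoidHom_mem_homC hτ₀, fun τ hτ => existsUnique_addMonoidHom_of_mem_homC hτ₀ hτ⟩⟩

/-- `Hom_c(ℤ^d, V/Λ)` is nonempty and the group `Hom(ℤ^d, V/Λ)` of group
homomorphisms acts freely and transitively on it by pointwise addition: for every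
`τ₀ ∈ Hom_c(ℤ^d, V/Λ)`, the map `h ↦ τ₀ + h` is a bijection from `Hom(ℤ^d, V/Λ)` onto
`Hom_c(ℤ^d, V/Λ)`. -/
theorem homC_nonempty_torsor {V : Type*} [AddCommGroup V] [Module ℝ V] (Λ : AddSubgroup V)
    (d : ℕ) (hd : 1 ≤ d)
    (c : (Fin d → ℤ) → (Fin d → ℤ) → V)
    (hc1 : ∀ x y z : Fin d → ℤ, c (x + y) z = c x z + c y z)
    (hc2 : ∀ x y z : Fin d → ℤ, c x (y + z) = c x y + c x z)
    (hanti : ∀ x y : Fin d → ℤ, c x y = - c y x)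
    (hΛ : ∀ x y : Fin d → ℤ, c x y ∈ Λ) :
    (HomC Λ d c).Nonempty ∧
    ∀ τ₀ ∈ HomC Λ d c,
      (∀ h : (Fin d → ℤ) →+ V ⧸ Λ, (fun ζ => τ₀ ζ + h ζ) ∈ HomC Λ d c) ∧
      (∀ τ ∈ HomC Λ d c, ∃! h : (Fin d → ℤ) →+ V ⧸ Λ, ∀ ζ, τ ζ = τ₀ ζ + h ζ) :=
  homC_nonempty_torsor_general Λ d c hc1 hc2 hanti hΛ
end
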